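/- Under the hypotheses of the component preserving theorem, if in addition each sigma_i is a maximal green sequence for hat{Q_i} (every mutation occurs at a green vertex), then the component preserving shuffle tau is a maximal green sequence for hat{Q}. -/

import Mathlib

/-
Follow the mutated framed quiver along `τ` through its components. By induction on prefixes
of `τ`, the frozen arrows never connect different components, and the ice quiver induced on each
component `i` is the one reached by mutating the framed component quiver along the corresponding
prefix of `σ i`. The step at `k` is green in its component; as the `c`-vectors along a green
sequence stay linearly independent, `k` has an arrow to some frozen vertex, so component
preservation forbids arrows into `k` from other components. Hence all arrows from `k` to other
components point away from `k` and the mutation does not touch them. Greenness and redness of `τ`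
are then read off componentwise from those of the `σ i`.
-/

/-- Fomin–Zelevinsky matrix mutation at index `k`. -/
def mutB {V : Type*} [DecidableEq V] (k : V) (B : V → V → ℤ) : V → V → ℤ :=
  fun i j =>
    if i = k ∨ j = k then -B i j
    else B i j + Int.sign (B i k) * max (B i k * B k j) 0

/-- Apply a sequence of mutations (left to right). -/
def mutSeq {V : Type*} [DecidableEq V] (σ : List V) (B : V → V → ℤ) : V → V → ℤ :=
  σ.foldl (fun M k => mutB k M) B

/-- The framed quiver of `B`: mutable vertices `Sum.inl`, frozen vertices `Sum.inr`. -/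
def framed {V : Type*} [DecidableEq V] (B : V → V → ℤ) : (V ⊕ V) → (V ⊕ V) → ℤ
  | Sum.inl i, Sum.inl j => B i j
  | Sum.inl i, Sum.inr j => if i = j then 1 else 0
  | Sum.inr i, Sum.inl j => if i = j then -1 else 0
  | Sum.inr _, Sum.inr _ => 0

/-- Apply a sequence of mutations at mutable vertices to an ice matrix on `V ⊕ V`. -/
def mutFr {V : Type*} [DecidableEq V] (σ : List V) (M : (V ⊕ V) → (V ⊕ V) → ℤ) :
    (V ⊕ V) → (V ⊕ V) → ℤ :=
  σ.foldl (fun N k => mutB (Sum.inl k) N) M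

/-- A mutable vertex is green if no frozen vertex has an arrow into it. -/
def IsGreen {V : Type*} (M : (V ⊕ V) → (V ⊕ V) → ℤ) (v : V) : Prop :=
  ∀ f, 0 ≤ M (Sum.inl v) (Sum.inr f)

/-- A mutable vertex is red if it has no arrows to frozen vertices. -/
def IsRed {V : Type*} (M : (V ⊕ V) → (V ⊕ V) → ℤ) (v : V) : Prop :=
  ∀ f, M (Sum.inl v) (Sum.inr f) ≤ 0

/-- A reddening sequence: after mutating the framed quiver, all mutable vertices are red. -/
def IsRedSeq {V : Type*} [DecidableEq V] (B : V → V → ℤ) (σ : List V) : Prop :=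
  ∀ v, IsRed (mutFr σ (framed B)) v

/-- A maximal green sequence: a reddening sequence each of whose mutations is at a green vertex. -/
def IsMGS {V : Type*} [DecidableEq V] (B : V → V → ℤ) (σ : List V) : Prop :=
  IsRedSeq B σ ∧ ∀ t (h : t < σ.length), IsGreen (mutFr (σ.take t) (framed B)) (σ[t]'h)

/-- A mutable vertex `k` is component preserving with respect to the block map `π`. -/
def CompPres {V ι : Type*} (π : V → ι) (M : (V ⊕ V) → (V ⊕ V) → ℤ) (k : V) : Prop :=
  ((∃ f, 0 < M (Sum.inl k) (Sum.inr f)) →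
    ∀ a, 0 < M (Sum.inl a) (Sum.inl k) → π a = π k) ∧
  ((∃ f, M (Sum.inl k) (Sum.inr f) < 0) →
    ∀ a, 0 < M (Sum.inl k) (Sum.inl a) → π a = π k)

/-- Every step of the sequence mutates at a component preserving vertex. -/
def CompPresSeq {V ι : Type*} [DecidableEq V] (π : V → ι) (σ : List V)
    (M : (V ⊕ V) → (V ⊕ V) → ℤ) : Prop :=
  ∀ t (h : t < σ.length), CompPres π (mutFr (σ.take t) M) (σ[t]'h)

open Function

lemma sign_mul_max_mul_zero_of_nonneg (x c : ℤ) (hc : 0 ≤ c) :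
    Int.sign x * max (x * c) 0 = max x 0 * c := by
  rcases lt_trichotomy x 0 with h | h | h
  · rw [Int.sign_eq_neg_one_of_neg h, max_eq_right (by nlinarith), max_eq_right h.le]; ring
  · simp [h]
  · rw [Int.sign_eq_one_of_pos h, max_eq_left (by positivity), max_eq_left h.le]; ring

lemma sign_mul_max_mul_zero_comm (x y : ℤ) :
    Int.sign y * max (x * y) 0 = Int.sign x * max (x * y) 0 := by
  rcases le_or_gt (x * y) 0 with h | h
  · simp [max_eq_right h]
  · rcases lt_trichotomy x 0 with hx | hx | hx
    · rw [Int.sign_eq_neg_one_of_neg hx, Int.sign_eq_neg_one_of_neg (by nlinarith)]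
    · simp [hx] at h
    · rw [Int.sign_eq_one_of_pos hx, Int.sign_eq_one_of_pos (by nlinarith)]

section Mutation

variable {W : Type*} [DecidableEq W]

lemma mutB_of_ne {k x y : W} (M : W → W → ℤ) (hx : x ≠ k) (hy : y ≠ k) :
    mutB k M x y = M x y + Int.sign (M x k) * max (M x k * M k y) 0 := by
  simp [mutB, hx, hy]

lemma mutB_self_left (k y : W) (M : W → W → ℤ) : mutB k M k y = -M k y := by
  simp [mutB]

lemma mutB_eq_self_of_mul_nonpos {k x y : W} (M : W → W → ℤ) (hx : x ≠ k) (hy : y ≠ k)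
    (h : M x k * M k y ≤ 0) : mutB k M x y = M x y := by
  simp [mutB_of_ne M hx hy, max_eq_right h]

lemma mutB_skew (k : W) {M : W → W → ℤ} (h : ∀ x y, M y x = -M x y) (x y : W) :
    mutB k M y x = -mutB k M x y := by
  by_cases hc : x = k ∨ y = k
  · simp [mutB, hc, Or.comm.1 hc, h x y]
  · rw [mutB_of_ne M (fun h' => hc (.inr h')) (fun h' => hc (.inl h')),
      mutB_of_ne M (fun h' => hc (.inl h')) (fun h' => hc (.inr h')), h x y, h k y, h x k,
      Int.sign_neg, neg_mul_neg, mul_comm (M k y), neg_mul, sign_mul_max_mul_zero_comm]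
    ring

lemma mutB_comp {W' : Type*} [DecidableEq W'] {g : W → W'} (hg : Injective g)
    (M : W' → W' → ℤ) (k x y : W) :
    mutB (g k) M (g x) (g y) = mutB k (fun x y => M (g x) (g y)) x y := by
  simp only [mutB, hg.eq_iff]

end Mutation

section IceMatrix

variable {V : Type*} [DecidableEq V]

lemma mutFr_append_singleton (l : List V) (k : V) (M : (V ⊕ V) → (V ⊕ V) → ℤ) :
    mutFr (l ++ [k]) M = mutB (Sum.inl k) (mutFr l M) := by
  simp [mutFr, List.foldl_append]

lemma framed_skew {B : V → V → ℤ} (hskew : ∀ i j, B j i = -B i j) (x y : V ⊕ V) :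
    framed B y x = -framed B x y := by
  rcases x with a | a <;> rcases y with b | b <;>
    simp [framed, hskew a b, eq_comm, apply_ite Neg.neg]

lemma mutFr_skew (l : List V) {M : (V ⊕ V) → (V ⊕ V) → ℤ} (h : ∀ x y, M y x = -M x y) :
    ∀ x y, mutFr l M y x = -mutFr l M x y := by
  induction l generalizing M with
  | nil => exact h
  | cons a l ih => exact ih (mutB_skew _ h)

end IceMatrix

section Restriction

variable {V W : Type*} [DecidableEq V] {M : (V ⊕ V) → (V ⊕ V) → ℤ} {e : W → V}

def restrictIce (e : W → V) (M : (V ⊕ V) → (V ⊕ V) → ℤ) :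
    (W ⊕ W) → (W ⊕ W) → ℤ :=
  fun x y => M (Sum.map e e x) (Sum.map e e y)

lemma restrictIce_framed [DecidableEq W] (he : Injective e) (B : V → V → ℤ) :
    restrictIce e (framed B) = framed fun a b => B (e a) (e b) := by
  funext x y
  rcases x with a | a <;> rcases y with b | b <;> simp [restrictIce, framed, he.eq_iff]

lemma restrictIce_mutB [DecidableEq W] (he : Injective e) (M : (V ⊕ V) → (V ⊕ V) → ℤ)
    (k : W) :
    restrictIce e (mutB (Sum.inl (e k)) M) = mutB (Sum.inl k) (restrictIce e M) := by
  funext x y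
  exact mutB_comp (he.sumMap he) M (Sum.inl k) x y

lemma restrictIce_mutB_of_row_nonneg (hskew : ∀ x y, M y x = -M x y) {k : V}
    (hk : ∀ a, e a ≠ k)
    (hrow : ∀ x, 0 ≤ M (Sum.inl k) (Sum.map e e x)) :
    restrictIce e (mutB (Sum.inl k) M) = restrictIce e M := by
  have hne : ∀ x : W ⊕ W, Sum.map e e x ≠ Sum.inl k := by
    rintro (a | a) <;> simp [hk]
  funext x y
  refine mutB_eq_self_of_mul_nonpos M (hne x) (hne y) ?_
  rw [hskew]
  nlinarith [hrow x, hrow y]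

end Restriction

section CMatrix

variable {W : Type*} {M : (W ⊕ W) → (W ⊕ W) → ℤ} {k : W}

def cMat (M : (W ⊕ W) → (W ⊕ W) → ℤ) : W → W → ℤ :=
  fun a f => M (Sum.inl a) (Sum.inr f)

lemma linearIndependent_cMat_framed [DecidableEq W] (B : W → W → ℤ) :
    LinearIndependent ℤ (cMat (framed B)) := by
  have h : cMat (framed B) = fun a => Pi.single a 1 := by
    funext a f
    simp [cMat, framed, Pi.single_apply, eq_comm]
  rw [h]
  exact Pi.linearIndependent_single_one W ℤ

/-- At a green vertex the mutation acts on the rows of the `c`-matrix by an invertible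
integer transformation: `c k ↦ -c k` and `c a ↦ c a + [b_ak]₊ c k`. -/
lemma linearIndependent_cMat_mutB [DecidableEq W] (hk : IsGreen M k)
    (h : LinearIndependent ℤ (cMat M)) : LinearIndependent ℤ (cMat (mutB (Sum.inl k) M)) := by
  let c : W → ℤ := fun a => if a = k then 0 else max (M (Sum.inl a) (Sum.inl k)) 0
  let u : W → ℤˣ := fun a => if a = k then -1 else 1
  have hrows : cMat (mutB (Sum.inl k) M) = u • (cMat M + (c · • cMat M k)) := by
    funext a f
    by_cases ha : a = k
    · subst ha
      simp [cMat, c, u, mutB_self_left]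
    · rw [cMat, mutB_of_ne M (by simpa using ha) Sum.inr_ne_inl,
        sign_mul_max_mul_zero_of_nonneg _ _ (hk f)]
      simp [cMat, c, u, ha]
  rw [hrows]
  exact ((linearIndependent_add_smul_iff (by simp [c])).2 h).units_smul u

lemma IsGreen.exists_pos (hk : IsGreen M k)
    (h : LinearIndependent ℤ (cMat M)) : ∃ f, 0 < M (Sum.inl k) (Sum.inr f) := by
  obtain ⟨f, hf⟩ := Function.ne_iff.1 (h.ne_zero k)
  exact ⟨f, (hk f).lt_of_ne' hf⟩

end CMatrix

lemma List.forall_take_getElem_iff {α : Type*} (P : List α → α → Prop) (l : List α) :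
    (∀ t (h : t < l.length), P (l.take t) l[t]) ↔ ∀ p a, p ++ [a] <+: l → P p a := by
  constructor
  · rintro h p a ⟨r, rfl⟩
    have ht : p.length < (p ++ [a] ++ r).length := by simp
    simpa using h p.length ht
  · intro h t ht
    exact h _ _ ⟨l.drop (t + 1), by simp⟩

section GreenSequence

variable {W : Type*} [DecidableEq W] {M : (W ⊕ W) → (W ⊕ W) → ℤ} {s : List W}

def IsGreenSeq (M : (W ⊕ W) → (W ⊕ W) → ℤ) (s : List W) : Prop :=
  ∀ t (h : t < s.length), IsGreen (mutFr (s.take t) M) s[t]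

lemma isGreenSeq_iff_prefix :
    IsGreenSeq M s ↔ ∀ p k, p ++ [k] <+: s → IsGreen (mutFr p M) k :=
  List.forall_take_getElem_iff (fun p k => IsGreen (mutFr p M) k) s

lemma IsGreenSeq.of_prefix {s' : List W} (hs : IsGreenSeq M s) (h : s' <+: s) : IsGreenSeq M s' :=
  isGreenSeq_iff_prefix.2 fun _ _ hp => isGreenSeq_iff_prefix.1 hs _ _ (hp.trans h)

lemma IsGreenSeq.isGreen_last {k : W} (hs : IsGreenSeq M (s ++ [k])) :
    IsGreen (mutFr s M) k :=
  isGreenSeq_iff_prefix.1 hs _ _ (List.prefix_refl _)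

lemma IsGreenSeq.linearIndependent_cMat (hs : IsGreenSeq M s)
    (h : LinearIndependent ℤ (cMat M)) : LinearIndependent ℤ (cMat (mutFr s M)) := by
  induction s generalizing M with
  | nil => exact h
  | cons k s ih =>
    exact ih (fun t ht => hs (t + 1) (by simpa using ht))
      (linearIndependent_cMat_mutB (hs 0 (by simp)) h)

end GreenSequence

section Components

variable {V ι : Type*} [DecidableEq ι] {π : V → ι}

def compSeq (π : V → ι) (i : ι) (l : List V) : List {v // π v = i} :=
  l.filterMap fun v => if h : π v = i then some ⟨v, h⟩ else none

lemma map_val_compSeq (i : ι) (l : List V) :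
    (compSeq π i l).map Subtype.val = l.filter fun v => decide (π v = i) := by
  induction l with
  | nil => rfl
  | cons v l ih => by_cases h : π v = i <;> simp [compSeq, h, ← ih]

lemma compSeq_eq_of_filter_eq {i : ι} {l : List V} {s : List {v // π v = i}}
    (h : l.filter (fun v => decide (π v = i)) = s.map Subtype.val) : compSeq π i l = s :=
  List.map_injective_iff.2 Subtype.val_injective (by rw [map_val_compSeq, h])

lemma compSeq_append_self (l : List V) (k : V) :
    compSeq π (π k) (l ++ [k]) = compSeq π (π k) l ++ [⟨k, rfl⟩] := by
  simp [compSeq]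

lemma compSeq_append_of_ne {i : ι} (l : List V) {k : V} (hk : π k ≠ i) :
    compSeq π i (l ++ [k]) = compSeq π i l := by
  simp [compSeq, hk]

lemma IsGreenSeq.compSeq_append [DecidableEq V] {τ l : List V} {k : V}
    {M : _ → _ → ℤ}
    (hg : IsGreenSeq M (compSeq π (π k) τ)) (hl : l ++ [k] <+: τ) :
    IsGreenSeq M (compSeq π (π k) l ++ [⟨k, rfl⟩]) :=
  hg.of_prefix (compSeq_append_self (π := π) l k ▸ hl.filterMap _)

end Components

section BlockDiagonal

variable {V ι : Type*} {π : V → ι} {M : (V ⊕ V) → (V ⊕ V) → ℤ} {k : V}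

def IsCBlockDiagonal (π : V → ι) (M : (V ⊕ V) → (V ⊕ V) → ℤ) : Prop :=
  ∀ v f, π v ≠ π f → M (Sum.inl v) (Sum.inr f) = 0

lemma IsCBlockDiagonal.isGreen (hdiag : IsCBlockDiagonal π M)
    (hk : IsGreen (restrictIce (Subtype.val : {v // π v = π k} → V) M) ⟨k, rfl⟩) :
    IsGreen M k := by
  intro f
  by_cases hf : π f = π k
  · exact hk ⟨f, hf⟩
  · exact (hdiag k f (Ne.symm hf)).ge

lemma CompPres.row_nonneg (hskew : ∀ x y, M y x = -M x y) (hcp : CompPres π M k)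
    (hpos : ∃ f, 0 < M (Sum.inl k) (Sum.inr f)) {a : V} (ha : π a ≠ π k) :
    0 ≤ M (Sum.inl k) (Sum.inl a) := by
  by_contra h
  exact ha (hcp.1 hpos a (by rw [hskew]; omega))

lemma IsCBlockDiagonal.mutB [DecidableEq V] (hskew : ∀ x y, M y x = -M x y)
    (hdiag : IsCBlockDiagonal π M) (hk : IsGreen M k)
    (hrow : ∀ a, π a ≠ π k → 0 ≤ M (Sum.inl k) (Sum.inl a)) :
    IsCBlockDiagonal π (mutB (Sum.inl k) M) := by
  intro v f hvf
  by_cases hv : v = k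
  · subst hv
    rw [mutB_self_left, hdiag _ _ hvf, neg_zero]
  · rw [mutB_eq_self_of_mul_nonpos M (by simpa using hv) Sum.inr_ne_inl, hdiag v f hvf]
    rw [hskew (Sum.inl k)]
    by_cases hf : π f = π k
    · nlinarith [hrow v (hf ▸ hvf), hk f]
    · simp [hdiag k f (Ne.symm hf)]

lemma IsCBlockDiagonal.restrictIce_mutB_of_ne [DecidableEq V] (hskew : ∀ x y, M y x = -M x y)
    (hdiag : IsCBlockDiagonal π M)
    (hrow : ∀ a, π a ≠ π k → 0 ≤ M (Sum.inl k) (Sum.inl a)) {i : ι} (hi : π k ≠ i) :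
    restrictIce (Subtype.val : {v // π v = i} → V) (_root_.mutB (Sum.inl k) M) =
      restrictIce Subtype.val M := by
  refine restrictIce_mutB_of_row_nonneg hskew (fun a h => hi (h ▸ a.2)) ?_
  rintro (a | f)
  · exact hrow a (fun h => hi (h ▸ a.2))
  · exact (hdiag k f (fun h => hi (h ▸ f.2))).ge

end BlockDiagonal

section Shuffle

variable {V ι : Type*} [DecidableEq V] [DecidableEq ι] {π : V → ι} {B : V → V → ℤ}
  {l : List V} {M : (V ⊕ V) → (V ⊕ V) → ℤ} {k : V}

def MatchesComponents (π : V → ι) (B : V → V → ℤ) (l : List V)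
    (M : (V ⊕ V) → (V ⊕ V) → ℤ) : Prop :=
  IsCBlockDiagonal π M ∧ ∀ i, restrictIce (Subtype.val : {v // π v = i} → V) M =
    mutFr (compSeq π i l) (framed fun a b : {v // π v = i} => B a.1 b.1)

lemma matchesComponents_framed (π : V → ι) (B : V → V → ℤ) :
    MatchesComponents π B [] (framed B) := by
  refine ⟨fun v f hvf => ?_, fun i => restrictIce_framed Subtype.val_injective B⟩
  have hne : v ≠ f := fun h => hvf (h ▸ rfl)
  simp [framed, hne]

lemma MatchesComponents.isGreen (h : MatchesComponents π B l M)
    (hg : IsGreenSeq (framed fun a b : {v // π v = π k} => B a.1 b.1)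
      (compSeq π (π k) l ++ [⟨k, rfl⟩])) :
    IsGreen M k ∧ ∃ f, 0 < M (Sum.inl k) (Sum.inr f) := by
  have hk : IsGreen (restrictIce Subtype.val M) (⟨k, rfl⟩ : {v // π v = π k}) :=
    h.2 (π k) ▸ hg.isGreen_last
  have hind :
      LinearIndependent ℤ (cMat (restrictIce (Subtype.val : {v // π v = π k} → V) M)) :=
    h.2 (π k) ▸ (hg.of_prefix (List.prefix_append _ _)).linearIndependent_cMat
      (linearIndependent_cMat_framed _)
  obtain ⟨f, hf⟩ := hk.exists_pos hind
  exact ⟨h.1.isGreen hk, f.1, hf⟩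

lemma MatchesComponents.mutB (h : MatchesComponents π B l M) (hskew : ∀ x y, M y x = -M x y)
    (hk : IsGreen M k) (hrow : ∀ a, π a ≠ π k → 0 ≤ M (Sum.inl k) (Sum.inl a)) :
    MatchesComponents π B (l ++ [k]) (_root_.mutB (Sum.inl k) M) := by
  refine ⟨h.1.mutB hskew hk hrow, fun i => ?_⟩
  by_cases hi : π k = i
  · subst hi
    rw [compSeq_append_self, mutFr_append_singleton, ← h.2]
    exact restrictIce_mutB (e := (Subtype.val : {v // π v = π k} → V)) Subtype.val_injective M
      ⟨k, rfl⟩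
  · rw [compSeq_append_of_ne l hi, h.1.restrictIce_mutB_of_ne hskew hrow hi, h.2]

lemma MatchesComponents.isRed (h : MatchesComponents π B l M)
    (hred : ∀ i, IsRedSeq (fun a b : {v // π v = i} => B a.1 b.1) (compSeq π i l)) (v : V) :
    IsRed M v := by
  intro f
  by_cases hf : π f = π v
  · exact (congrFun₂ (h.2 (π v)) (.inl ⟨v, rfl⟩) (.inr ⟨f, hf⟩)).trans_le
      (hred (π v) ⟨v, rfl⟩ ⟨f, hf⟩)
  · exact (h.1 v f (Ne.symm hf)).le

lemma matchesComponents_of_prefix (hskew : ∀ i j, B j i = -B i j) {τ : List V}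
    (hcp : CompPresSeq π τ (framed B))
    (hgreen : ∀ i, IsGreenSeq (framed fun a b : {v // π v = i} => B a.1 b.1) (compSeq π i τ))
    (hl : l <+: τ) : MatchesComponents π B l (mutFr l (framed B)) := by
  induction l using List.reverseRecOn with
  | nil => exact matchesComponents_framed π B
  | append_singleton l k ih =>
    have h := ih ((List.prefix_append l [k]).trans hl)
    have hskewM := mutFr_skew l (framed_skew hskew)
    obtain ⟨hk, hpos⟩ := h.isGreen ((hgreen (π k)).compSeq_append hl)
    have hcpk : CompPres π (mutFr l (framed B)) k :=
      (List.forall_take_getElem_iff (fun p k => CompPres π (mutFr p (framed B)) k) τ).1 hcp l k hl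
    rw [mutFr_append_singleton]
    exact h.mutB hskewM hk fun a ha => hcpk.row_nonneg hskewM hpos ha

end Shuffle

/-- a component preserving shuffle of maximal green sequences of
the components is a maximal green sequence for the whole quiver. -/
theorem component_preserving_mgs {V ι : Type*} [DecidableEq V] [DecidableEq ι]
    (B : V → V → ℤ) (hskew : ∀ i j, B j i = -B i j)
    (π : V → ι) (σ : (i : ι) → List {v : V // π v = i})
    (hmgs : ∀ i, IsMGS (fun a b : {v : V // π v = i} => B a.1 b.1) (σ i))
    (τ : List V)
    (hshuf : ∀ i, τ.filter (fun v => decide (π v = i)) = (σ i).map Subtype.val)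
    (hcp : CompPresSeq π τ (framed B)) :
    IsMGS B τ := by
  have hσ : ∀ i, compSeq π i τ = σ i := fun i => compSeq_eq_of_filter_eq (hshuf i)
  have hgreen :
      ∀ i, IsGreenSeq (framed fun a b : {v // π v = i} => B a.1 b.1) (compSeq π i τ) :=
    fun i => (hσ i).symm ▸ (hmgs i).2
  have hmatch : ∀ l, l <+: τ → MatchesComponents π B l (mutFr l (framed B)) :=
    fun l hl => matchesComponents_of_prefix hskew hcp hgreen hl
  refine ⟨(hmatch τ (List.prefix_refl τ)).isRed fun i => (hσ i).symm ▸ (hmgs i).1, ?_⟩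
  exact isGreenSeq_iff_prefix.2 fun l k hl =>
    ((hmatch l ((List.prefix_append l [k]).trans hl)).isGreen
      ((hgreen (π k)).compSeq_append hl)).1
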